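/- arXiv:1611.02423 — 3 statements merged into one kernel-verified Lean document; each statement's English description precedes it below -/
import Mathlib

section
/- For integers r ≥ 2 and k ≥ 1 with rk ≥ 4, if x is an integer with x ≡ 2^r − 1 (mod 2^r) and x ≥ 3^r, then Σ_{d^r ≤ x} μ(d)/d^{rk} · {x/d^r} < −1/2^{rk+1} + 1/2^{r(k+1)} < 0. -/
/-!
Only `d = 1` and `d = 2` matter. The `d = 1` term vanishes because `x` is an integer, and the
congruence on `x` makes `{x / 2^r} = 1 - 2^{-r}`, so the `d = 2` term is `-2^{-rk} + 2^{-r(k+1)}`.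
Every other term is at most `d^{-rk}` in absolute value, and for `m ≥ 4` the tail
`∑_{d ≥ 3} d^{-m}` is below `2^{-m-1}`: compare with `3^{3-m} ∑_{d ≥ 3} d^{-3} ≤ 3^{3-m} / 12`.
-/

open Finset

-- Telescoping: `1 / (N+1)^3 ≤ 1 / (N (N+1) (N+2)) = 1 / (2N(N+1)) - 1 / (2(N+1)(N+2))`.
lemma sum_Icc_three_one_div_pow_three_le_sub {N : ℕ} (hN : 2 ≤ N) :
    ∑ d ∈ Icc 3 N, 1 / (d : ℝ) ^ 3 ≤ 1 / 12 - 1 / (2 * (N : ℝ) * (N + 1)) := by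
  induction N, hN using Nat.le_induction with
  | base => norm_num
  | succ N hN ih =>
    have hN' : (2 : ℝ) ≤ N := by exact_mod_cast hN
    have hstep : 1 / ((N : ℝ) + 1) ^ 3 ≤
        1 / (2 * N * (N + 1)) - 1 / (2 * (N + 1) * (N + 1 + 1)) := by
      rw [show 1 / (2 * (N : ℝ) * (N + 1)) - 1 / (2 * (N + 1) * (N + 1 + 1)) =
          1 / (N * (N + 1) * (N + 2)) by field_simp; ring]
      gcongr
      nlinarith
    rw [sum_Icc_succ_top (by omega)]
    push_cast
    linarith

lemma sum_Icc_three_one_div_pow_three_le (N : ℕ) :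
    ∑ d ∈ Icc 3 N, 1 / (d : ℝ) ^ 3 ≤ 1 / 12 := by
  rcases lt_or_ge N 2 with hN | hN
  · rw [Icc_eq_empty (by omega), sum_empty]
    norm_num
  · have : 0 ≤ 1 / (2 * (N : ℝ) * (N + 1)) := by positivity
    linarith [sum_Icc_three_one_div_pow_three_le_sub hN]

lemma sum_Icc_three_one_div_pow_le {m : ℕ} (hm : 3 ≤ m) (N : ℕ) :
    ∑ d ∈ Icc 3 N, 1 / (d : ℝ) ^ m ≤ 1 / (12 * 3 ^ (m - 3)) := by
  calc ∑ d ∈ Icc 3 N, 1 / (d : ℝ) ^ m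
      ≤ ∑ d ∈ Icc 3 N, 1 / (3 : ℝ) ^ (m - 3) * (1 / (d : ℝ) ^ 3) := by
        refine sum_le_sum fun d hd => ?_
        have hd : (3 : ℝ) ≤ d := by exact_mod_cast (mem_Icc.mp hd).1
        rw [one_div_mul_one_div, ← Nat.sub_add_cancel hm, pow_add, Nat.add_sub_cancel]
        gcongr
    _ ≤ 1 / (3 : ℝ) ^ (m - 3) * (1 / 12) := by
        rw [← mul_sum]
        gcongr
        exact sum_Icc_three_one_div_pow_three_le N
    _ = 1 / (12 * 3 ^ (m - 3)) := by ring

lemma two_pow_succ_lt_twelve_mul_three_pow {m : ℕ} (hm : 4 ≤ m) :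
    2 ^ (m + 1) < 12 * 3 ^ (m - 3) := by
  induction m, hm using Nat.le_induction with
  | base => norm_num
  | succ m hm ih =>
    rw [show m + 1 - 3 = m - 3 + 1 by omega, pow_succ, pow_succ]
    omega

/-- The finite form of `ζ(m) - 1 - 2^{-m} < 2^{-m-1}` for `m ≥ 4`. -/
lemma sum_Icc_three_one_div_pow_lt {m : ℕ} (hm : 4 ≤ m) (N : ℕ) :
    ∑ d ∈ Icc 3 N, 1 / (d : ℝ) ^ m < 1 / 2 ^ (m + 1) := by
  refine (sum_Icc_three_one_div_pow_le (by omega) N).trans_lt ?_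
  gcongr
  exact_mod_cast two_pow_succ_lt_twelve_mul_three_pow hm

lemma moebius_div_pow_mul_fract_le (d m : ℕ) (y : ℝ) :
    (ArithmeticFunction.moebius d : ℝ) / (d : ℝ) ^ m * Int.fract y ≤ 1 / (d : ℝ) ^ m := by
  have hμ : |(ArithmeticFunction.moebius d : ℝ)| ≤ 1 := by
    exact_mod_cast ArithmeticFunction.abs_moebius_le_one
  have hμf : (ArithmeticFunction.moebius d : ℝ) * Int.fract y ≤ 1 := by
    calc _ ≤ |(ArithmeticFunction.moebius d : ℝ)| * Int.fract y :=
          mul_le_mul_of_nonneg_right (le_abs_self _) (Int.fract_nonneg y)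
      _ ≤ 1 * 1 := mul_le_mul hμ (Int.fract_lt_one y).le (Int.fract_nonneg y) zero_le_one
      _ = 1 := one_mul 1
  rw [div_mul_eq_mul_div]
  gcongr

lemma sum_Icc_three_ite_moebius_div_pow_mul_fract_lt {m : ℕ} (hm : 4 ≤ m) (N : ℕ)
    (p : ℕ → Prop) [DecidablePred p] (y : ℕ → ℝ) :
    (∑ d ∈ Icc 3 N, if p d then
      (ArithmeticFunction.moebius d : ℝ) / (d : ℝ) ^ m * Int.fract (y d) else 0) <
      1 / 2 ^ (m + 1) := by
  refine (sum_le_sum fun d _ => ?_).trans_lt (sum_Icc_three_one_div_pow_lt hm N)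
  split_ifs
  · exact moebius_div_pow_mul_fract_le d m (y d)
  · positivity

lemma fract_div_two_pow_of_mod_eq {r x : ℕ} (hx : x % 2 ^ r = 2 ^ r - 1) :
    Int.fract ((x : ℝ) / 2 ^ r) = 1 - 1 / 2 ^ r := by
  have h := Int.fract_div_natCast_eq_div_natCast_mod (k := ℝ) (m := x) (n := 2 ^ r)
  rw [hx, Nat.cast_sub Nat.one_le_two_pow] at h
  push_cast at h
  rw [h, sub_div, div_self (by positivity)]

lemma moebius_two_div_pow_mul_fract_of_mod_eq {r x : ℕ} (hx : x % 2 ^ r = 2 ^ r - 1) (m : ℕ) :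
    (ArithmeticFunction.moebius 2 : ℝ) / 2 ^ m * Int.fract ((x : ℝ) / 2 ^ r) =
      -(1 / 2 ^ m) * (1 - 1 / 2 ^ r) := by
  rw [ArithmeticFunction.moebius_apply_prime Nat.prime_two, fract_div_two_pow_of_mod_eq hx]
  push_cast
  ring

theorem sum_moebius_fract_neg_of_cong_general (r k : ℕ) (hr : 2 ≤ r) (hrk : 4 ≤ r * k)
    (x : ℕ) (hx : x % 2 ^ r = 2 ^ r - 1) (hx3 : 3 ^ r ≤ x) :
    (∑ d ∈ Finset.Icc 1 x, if d ^ r ≤ x then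
        (ArithmeticFunction.moebius d : ℝ) / (d : ℝ) ^ (r * k) *
          Int.fract ((x : ℝ) / (d : ℝ) ^ r) else 0) <
      -1 / 2 ^ (r * k + 1) + 1 / 2 ^ (r * (k + 1)) ∧
    (-1 / 2 ^ (r * k + 1) + 1 / 2 ^ (r * (k + 1)) : ℝ) < 0 := by
  have h2x : 2 ^ r ≤ x := (Nat.pow_le_pow_left (by norm_num) r).trans hx3
  have hsplit : Icc 1 x = insert 1 (insert 2 (Icc 3 x)) := by
    have : 2 ≤ x := (Nat.le_self_pow (by omega) 2).trans h2x
    ext d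
    simp only [mem_Icc, mem_insert]
    omega
  have htail := sum_Icc_three_ite_moebius_div_pow_mul_fract_lt hrk x (· ^ r ≤ x)
    fun d => (x : ℝ) / (d : ℝ) ^ r
  have hhalf : (1 : ℝ) / 2 ^ (r * k + 1) = 1 / 2 ^ (r * k) / 2 := by
    rw [pow_succ, div_div]
  have hprod : (1 : ℝ) / 2 ^ (r * (k + 1)) = 1 / 2 ^ (r * k) * (1 / 2 ^ r) := by
    rw [mul_add, mul_one, pow_add, one_div_mul_one_div]
  have hquarter : (1 : ℝ) / 2 ^ r ≤ 1 / 4 := by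
    rw [show (4 : ℝ) = 2 ^ 2 by norm_num]
    gcongr
    norm_num
  have hpos : (0 : ℝ) < 1 / 2 ^ (r * k) := by positivity
  rw [hsplit, sum_insert (by simp), sum_insert (by simp)]
  simp only [one_pow, Nat.cast_one, div_one, Int.fract_natCast, mul_zero, ite_self, zero_add,
    if_pos h2x, Nat.cast_ofNat, moebius_two_div_pow_mul_fract_of_mod_eq hx, neg_div]
  constructor
  · linarith
  · nlinarith

theorem sum_moebius_fract_neg_of_cong (r k : ℕ) (hr : 2 ≤ r) (hk : 1 ≤ k) (hrk : 4 ≤ r * k)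
    (x : ℕ) (hx : x % 2 ^ r = 2 ^ r - 1) (hx3 : 3 ^ r ≤ x) :
    (∑ d ∈ Finset.Icc 1 x, if d ^ r ≤ x then
        (ArithmeticFunction.moebius d : ℝ) / (d : ℝ) ^ (r * k) *
          Int.fract ((x : ℝ) / (d : ℝ) ^ r) else 0) <
      -1 / 2 ^ (r * k + 1) + 1 / 2 ^ (r * (k + 1)) ∧
    (-1 / 2 ^ (r * k + 1) + 1 / 2 ^ (r * (k + 1)) : ℝ) < 0 :=
  sum_moebius_fract_neg_of_cong_general r k hr hrk x hx hx3
end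

section
/- For integers r ≥ 1 and k ≥ 1 with rk ≥ 2, the sum Σ_{d^r ≤ x} μ(d)(x/d^r)^k {x/d^r} is Ω(x^k), i.e. limsup_{x→∞} |Σ_{d^r ≤ x} μ(d)(x/d^r)^k {x/d^r}| / x^k > 0. -/
/-!
Only the term `d = 1` is large: it equals `x ^ k * {x}`. Since `r * k ≥ 2`, the terms with
`d ≥ 2` are bounded by `x ^ k / d ^ 2`, and `∑_{d ≥ 2} d⁻² ≤ 3 / 4`. Hence along `x = m + 9 / 10`
the sum is at least `(9 / 10 - 3 / 4) * x ^ k`, while it is always at most `(1 + 3 / 4) * x ^ k`.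
-/

open Filter Finset

noncomputable def moebiusFractTerm (r k : ℕ) (x : ℝ) (d : ℕ) : ℝ :=
  if (d : ℝ) ^ r ≤ x then
    (ArithmeticFunction.moebius d : ℝ) * (x / (d : ℝ) ^ r) ^ k * Int.fract (x / (d : ℝ) ^ r)
  else 0

noncomputable def moebiusFractSum (r k : ℕ) (x : ℝ) : ℝ :=
  ∑ d ∈ Icc 1 ⌊x⌋₊, moebiusFractTerm r k x d

lemma sum_Ioc_one_inv_sq_le (N : ℕ) : ∑ d ∈ Ioc 1 N, ((d : ℝ) ^ 2)⁻¹ ≤ 3 / 4 := by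
  rcases le_or_gt N 1 with hN | hN
  · rw [Ioc_eq_empty_of_le hN, sum_empty]
    norm_num
  · rw [← Icc_add_one_left_eq_Ioc, ← add_sum_Ioc_eq_sum_Icc hN]
    have htail := sum_Ioc_inv_sq_le_sub (α := ℝ) two_ne_zero hN
    have : (0 : ℝ) ≤ (N : ℝ)⁻¹ := by positivity
    norm_num at htail ⊢
    linarith

section

variable {r k : ℕ} {x : ℝ}

lemma abs_moebiusFractTerm_le (hx : 0 ≤ x) (d : ℕ) :
    |moebiusFractTerm r k x d| ≤ x ^ k / (d : ℝ) ^ (r * k) := by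
  unfold moebiusFractTerm
  split_ifs
  · set t := x / (d : ℝ) ^ r
    have ht : 0 ≤ t := by positivity
    calc |(ArithmeticFunction.moebius d : ℝ) * t ^ k * Int.fract t|
        = |(ArithmeticFunction.moebius d : ℝ)| * t ^ k * Int.fract t := by
          rw [abs_mul, abs_mul, abs_of_nonneg (pow_nonneg ht k),
            abs_of_nonneg (Int.fract_nonneg t)]
      _ ≤ 1 * t ^ k * 1 := by
          gcongr
          · exact_mod_cast ArithmeticFunction.abs_moebius_le_one
          · exact (Int.fract_lt_one t).le
      _ = x ^ k / (d : ℝ) ^ (r * k) := by rw [one_mul, mul_one, div_pow, pow_mul]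
  · rw [abs_zero]
    positivity

lemma moebiusFractTerm_one (hx : 1 ≤ x) : moebiusFractTerm r k x 1 = x ^ k * Int.fract x := by
  simp [moebiusFractTerm, hx]

lemma abs_sum_Ioc_one_moebiusFractTerm_le (hrk : 2 ≤ r * k) (hx : 0 ≤ x) (N : ℕ) :
    |∑ d ∈ Ioc 1 N, moebiusFractTerm r k x d| ≤ 3 / 4 * x ^ k :=
  calc |∑ d ∈ Ioc 1 N, moebiusFractTerm r k x d|
      ≤ ∑ d ∈ Ioc 1 N, |moebiusFractTerm r k x d| := abs_sum_le_sum_abs _ _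
    _ ≤ ∑ d ∈ Ioc 1 N, x ^ k * ((d : ℝ) ^ 2)⁻¹ := by
        refine sum_le_sum fun d hd => (abs_moebiusFractTerm_le hx d).trans ?_
        have hd : (1 : ℝ) ≤ d := by exact_mod_cast (mem_Ioc.1 hd).1.le
        rw [← div_eq_mul_inv]
        gcongr
    _ = x ^ k * ∑ d ∈ Ioc 1 N, ((d : ℝ) ^ 2)⁻¹ := by rw [mul_sum]
    _ ≤ x ^ k * (3 / 4) := by gcongr; exact sum_Ioc_one_inv_sq_le N
    _ = 3 / 4 * x ^ k := mul_comm _ _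

lemma abs_moebiusFractSum_sub_le (hrk : 2 ≤ r * k) (hx : 1 ≤ x) :
    |moebiusFractSum r k x - x ^ k * Int.fract x| ≤ 3 / 4 * x ^ k := by
  have hN : 1 ≤ ⌊x⌋₊ := Nat.le_floor (by exact_mod_cast hx)
  rw [moebiusFractSum, ← add_sum_Ioc_eq_sum_Icc hN, moebiusFractTerm_one hx, add_sub_cancel_left]
  exact abs_sum_Ioc_one_moebiusFractTerm_le hrk (by linarith) _

lemma abs_abs_moebiusFractSum_div_sub_fract_le (hrk : 2 ≤ r * k) (hx : 1 ≤ x) :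
    |(|moebiusFractSum r k x| / x ^ k) - Int.fract x| ≤ 3 / 4 := by
  have hxk : 0 < x ^ k := by positivity
  have hfract : |x ^ k * Int.fract x| = x ^ k * Int.fract x :=
    abs_of_nonneg (mul_nonneg hxk.le (Int.fract_nonneg x))
  calc |(|moebiusFractSum r k x| / x ^ k) - Int.fract x|
      = |(|moebiusFractSum r k x| - |x ^ k * Int.fract x|)| / x ^ k := by
        rw [hfract, div_sub' hxk.ne', abs_div, abs_of_pos hxk, mul_comm]
    _ ≤ |moebiusFractSum r k x - x ^ k * Int.fract x| / x ^ k := by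
        gcongr ?_ / _
        exact abs_abs_sub_abs_le_abs_sub _ _
    _ ≤ 3 / 4 * x ^ k / x ^ k := by gcongr; exact abs_moebiusFractSum_sub_le hrk hx
    _ = 3 / 4 := mul_div_cancel_right₀ _ hxk.ne'

end

lemma frequently_fract_eq (c : ℝ) (hc₀ : 0 ≤ c) (hc₁ : c < 1) :
    ∃ᶠ x : ℝ in atTop, Int.fract x = c := by
  refine frequently_atTop.2 fun a => ⟨⌈a⌉₊ + c, ?_, ?_⟩
  · linarith [Nat.le_ceil a]
  · rw [Int.fract_natCast_add, Int.fract_eq_self]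
    exact ⟨hc₀, hc₁⟩

theorem sum_moebius_fract_omega_general (r k : ℕ) (hrk : 2 ≤ r * k) :
    0 < limsup (fun x : ℝ =>
        |∑ d ∈ Finset.Icc 1 ⌊x⌋₊, if (d : ℝ) ^ r ≤ x then
            (ArithmeticFunction.moebius d : ℝ) * (x / (d : ℝ) ^ r) ^ k *
              Int.fract (x / (d : ℝ) ^ r) else 0| / x ^ k) atTop := by
  change 0 < limsup (fun x => |moebiusFractSum r k x| / x ^ k) atTop
  have hclose : ∀ᶠ x : ℝ in atTop,
      |(|moebiusFractSum r k x| / x ^ k) - Int.fract x| ≤ 3 / 4 := by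
    filter_upwards [eventually_ge_atTop 1] with x hx
    exact abs_abs_moebiusFractSum_div_sub_fract_le hrk hx
  have hbdd : IsBoundedUnder (· ≤ ·) atTop fun x => |moebiusFractSum r k x| / x ^ k := by
    refine isBoundedUnder_of_eventually_le (a := 7 / 4) (hclose.mono fun x hx => ?_)
    linarith [(abs_le.1 hx).2, Int.fract_lt_one x]
  have hfreq : ∃ᶠ x in atTop, 3 / 20 ≤ |moebiusFractSum r k x| / x ^ k := by
    refine ((frequently_fract_eq (9 / 10) (by norm_num) (by norm_num)).and_eventually
      hclose).mono fun x ⟨hfract, hx⟩ => ?_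
    linarith [(abs_le.1 hx).1]
  exact lt_of_lt_of_le (by norm_num) (le_limsup_of_frequently_le hfreq hbdd)

theorem sum_moebius_fract_omega (r k : ℕ) (hr : 1 ≤ r) (hk : 1 ≤ k) (hrk : 2 ≤ r * k) :
    0 < limsup (fun x : ℝ =>
        |∑ d ∈ Finset.Icc 1 ⌊x⌋₊, if (d : ℝ) ^ r ≤ x then
            (ArithmeticFunction.moebius d : ℝ) * (x / (d : ℝ) ^ r) ^ k *
              Int.fract (x / (d : ℝ) ^ r) else 0| / x ^ k) atTop :=
  sum_moebius_fract_omega_general r k hrk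
end

section
/- For positive integers r, k ≥ 1, the partial sum of the generalized Jordan totient satisfies Σ_{n ≤ x} J_{k-1}^r(n) = (1/k) Σ_{j=0}^{k-1} C(k,j) B_j Σ_{d^r ≤ x} μ(d)(x/d^r − {x/d^r})^{k−j}, where B_j are the Bernoulli numbers with convention B_1 = 1/2. -/
/-- The generalized Jordan totient `J_k^r(n)`. -/
noncomputable def genJordan (r k n : ℕ) : ℕ :=
  Nat.card {t : Fin k → ℕ // (∀ i, 1 ≤ t i ∧ t i ≤ n) ∧
    ¬ ∃ p : ℕ, p.Prime ∧ p ^ r ∣ n ∧ ∀ i, p ^ r ∣ t i}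

/-!
Möbius inversion over the primes `p` with `p ^ r ∣ gcd (n, t₁, …, tₖ)` gives
`J_k^r(n) = ∑_{d ^ r ∣ n} μ(d) (n / d ^ r) ^ k`. Summing over `n ≤ x` and writing `n = d ^ r m`
turns the inner sums into power sums `∑_{m ≤ x / d ^ r} m ^ (k - 1)`, which Faulhaber's formula
expresses through Bernoulli numbers; finally `⌊x / d ^ r⌋ = x / d ^ r - {x / d ^ r}`, and the
terms with `d ^ r > x` vanish.
-/

open Finset ArithmeticFunction ArithmeticFunction.Moebius

namespace Nat

lemma prod_pow_dvd_of_forall_prime_pow_dvd {s : Finset ℕ} {r g : ℕ} (hs : ∀ p ∈ s, p.Prime)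
    (h : ∀ p ∈ s, p ^ r ∣ g) : (∏ p ∈ s, p) ^ r ∣ g := by
  rw [← prod_pow]
  refine prod_dvd_of_isRelPrime (fun p hp q hq hpq => ?_) h
  exact coprime_iff_isRelPrime.mp <|
    ((coprime_primes (hs p hp) (hs q hq)).2 hpq).pow r r

lemma sum_moebius_divisors (m : ℕ) : ∑ d ∈ m.divisors, (μ d : ℤ) = if m = 1 then 1 else 0 := by
  rw [← coe_mul_zeta_apply, moebius_mul_coe_zeta, one_apply]

open Classical in
theorem sum_moebius_filter_pow_dvd {r g n : ℕ} (hr : r ≠ 0) (hn : n ≠ 0) (hgn : g ∣ n) :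
    ∑ d ∈ n.divisors with d ^ r ∣ g, (μ d : ℤ) =
      if ∃ p, p.Prime ∧ p ^ r ∣ g then 0 else 1 := by
  have hg : g ≠ 0 := ne_zero_of_dvd_ne_zero hn hgn
  -- A squarefree `d` has `d ^ r ∣ g` iff `d ∣ ∏ p ∈ Q, p`, and `μ d = 0` for the other `d`.
  set Q := {p ∈ g.primeFactors | p ^ r ∣ g}
  have hQ : ∀ p ∈ Q, p.Prime := fun p hp => prime_of_mem_primeFactors (mem_filter.1 hp).1
  have hm : (∏ p ∈ Q, p) ^ r ∣ g :=
    prod_pow_dvd_of_forall_prime_pow_dvd hQ fun p hp => (mem_filter.1 hp).2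
  have hmemQ : ∀ p, p.Prime → p ^ r ∣ g → p ∈ Q := fun p hp hpg =>
    mem_filter.2 ⟨mem_primeFactors.2 ⟨hp, (dvd_pow_self p hr).trans hpg, hg⟩, hpg⟩
  have hsub : (∏ p ∈ Q, p).divisors ⊆ {d ∈ n.divisors | d ^ r ∣ g} := by
    intro d hd
    have hdg : d ^ r ∣ g := (pow_dvd_pow_of_dvd (dvd_of_mem_divisors hd) r).trans hm
    exact mem_filter.2 ⟨mem_divisors.2 ⟨(dvd_pow_self d hr).trans (hdg.trans hgn), hn⟩, hdg⟩
  have hzero : ∀ d ∈ {d ∈ n.divisors | d ^ r ∣ g}, d ∉ (∏ p ∈ Q, p).divisors → (μ d : ℤ) = 0 := by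
    intro d hd hdm
    by_contra hμ
    have hsf : Squarefree d := moebius_ne_zero_iff_squarefree.1 hμ
    refine hdm (mem_divisors.2 ⟨?_, (prod_pos fun p hp => (hQ p hp).pos).ne'⟩)
    rw [← prod_primeFactors_of_squarefree hsf]
    exact prod_dvd_prod_of_subset _ _ _ fun p hp => hmemQ p (prime_of_mem_primeFactors hp)
      ((pow_dvd_pow_of_dvd (dvd_of_mem_primeFactors hp) r).trans (mem_filter.1 hd).2)
  have hQ_empty : ∏ p ∈ Q, p = 1 ↔ ¬ ∃ p, p.Prime ∧ p ^ r ∣ g := by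
    rw [prod_eq_one_iff_of_one_le' fun p hp => (hQ p hp).one_lt.le]
    exact ⟨fun h ⟨p, hp, hpg⟩ => hp.ne_one (h p (hmemQ p hp hpg)),
      fun h p hpQ => absurd ⟨p, hQ p hpQ, (mem_filter.1 hpQ).2⟩ h⟩
  rw [← sum_subset hsub hzero, sum_moebius_divisors]
  simp only [hQ_empty, ite_not]

end Nat

open Classical in
lemma genJordan_eq_card (r k n : ℕ) : genJordan r k n =
    #{t ∈ Fintype.piFinset fun _ : Fin k => Icc 1 n |
      ¬ ∃ p : ℕ, p.Prime ∧ p ^ r ∣ n ∧ ∀ i, p ^ r ∣ t i} := by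
  rw [genJordan, ← Nat.card_eq_finsetCard]
  exact Nat.card_congr <| Equiv.subtypeEquivRight fun t => by simp [Fintype.mem_piFinset]

lemma card_piFinset_Icc_filter_forall_dvd (k n q : ℕ) :
    #{t ∈ Fintype.piFinset fun _ : Fin k => Icc 1 n | ∀ i, q ∣ t i} = (n / q) ^ k := by
  have : {t ∈ Fintype.piFinset fun _ : Fin k => Icc 1 n | ∀ i, q ∣ t i} =
      Fintype.piFinset fun _ => {m ∈ Icc 1 n | q ∣ m} := by
    ext t
    simp [Fintype.mem_piFinset, forall_and]
  rw [this, Fintype.card_piFinset, prod_const, card_univ, Fintype.card_fin]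
  exact congrArg (· ^ k) (Nat.Ioc_filter_dvd_card_eq_div n q)

theorem genJordan_eq_sum_moebius {r n : ℕ} (hr : r ≠ 0) (hn : n ≠ 0) (k : ℕ) :
    (genJordan r k n : ℤ) = ∑ d ∈ n.divisors with d ^ r ∣ n, μ d * ((n / d ^ r : ℕ) : ℤ) ^ k := by
  classical
  have hindicator : ∀ t : Fin k → ℕ,
      (if ∃ p : ℕ, p.Prime ∧ p ^ r ∣ n ∧ ∀ i, p ^ r ∣ t i then 0 else 1 : ℤ) =
        ∑ d ∈ n.divisors with d ^ r ∣ n ∧ ∀ i, d ^ r ∣ t i, (μ d : ℤ) := by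
    intro t
    have := Nat.sum_moebius_filter_pow_dvd hr hn (Nat.gcd_dvd_left n (univ.gcd t))
    simp only [Nat.dvd_gcd_iff, Finset.dvd_gcd_iff, mem_univ, true_imp_iff] at this
    exact this.symm
  calc (genJordan r k n : ℤ)
      = ∑ t ∈ Fintype.piFinset fun _ : Fin k => Icc 1 n,
          if ∃ p : ℕ, p.Prime ∧ p ^ r ∣ n ∧ ∀ i, p ^ r ∣ t i then 0 else 1 := by
        rw [genJordan_eq_card, natCast_card_filter]
        simp only [ite_not]
    _ = ∑ t ∈ Fintype.piFinset fun _ : Fin k => Icc 1 n,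
          ∑ d ∈ n.divisors with d ^ r ∣ n ∧ ∀ i, d ^ r ∣ t i, (μ d : ℤ) :=
        sum_congr rfl fun t _ => hindicator t
    _ = ∑ d ∈ n.divisors with d ^ r ∣ n,
          ∑ t ∈ Fintype.piFinset fun _ : Fin k => Icc 1 n with ∀ i, d ^ r ∣ t i, (μ d : ℤ) :=
        sum_comm' fun t d => by simp only [mem_filter]; tauto
    _ = _ := sum_congr rfl fun d _ => by
        rw [sum_const, card_piFinset_Icc_filter_forall_dvd, nsmul_eq_mul, mul_comm, Nat.cast_pow]

lemma sum_Icc_filter_dvd_div {M : Type*} [AddCommMonoid M] (f : ℕ → M) {q : ℕ} (hq : q ≠ 0)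
    (N : ℕ) : ∑ n ∈ Icc 1 N with q ∣ n, f (n / q) = ∑ m ∈ Icc 1 (N / q), f m := by
  refine sum_nbij' (· / q) (q * ·) (fun n hn => ?_) (fun m hm => ?_) (fun n hn => ?_)
    (fun m _ => Nat.mul_div_cancel_left m (Nat.pos_of_ne_zero hq)) (fun _ _ => rfl)
  · obtain ⟨⟨h1, hN⟩, hqn⟩ := by simpa only [mem_filter, mem_Icc] using hn
    exact mem_Icc.2 ⟨Nat.div_pos (Nat.le_of_dvd h1 hqn) (Nat.pos_of_ne_zero hq),
      Nat.div_le_div_right hN⟩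
  · obtain ⟨h1, hN⟩ := mem_Icc.1 hm
    exact mem_filter.2 ⟨mem_Icc.2 ⟨Nat.mul_pos (Nat.pos_of_ne_zero hq) h1,
      (Nat.le_div_iff_mul_le (Nat.pos_of_ne_zero hq)).1 hN |>.trans_eq' (mul_comm _ _)⟩,
      dvd_mul_right q m⟩
  · exact Nat.mul_div_cancel' (mem_filter.1 hn).2

theorem sum_genJordan_eq_sum_moebius_mul_sum_pow {r : ℕ} (hr : r ≠ 0) (k N : ℕ) :
    ∑ n ∈ Icc 1 N, (genJordan r k n : ℤ) =
      ∑ d ∈ Icc 1 N, μ d * ∑ m ∈ Icc 1 (N / d ^ r), (m : ℤ) ^ k := by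
  calc ∑ n ∈ Icc 1 N, (genJordan r k n : ℤ)
      = ∑ n ∈ Icc 1 N, ∑ d ∈ n.divisors with d ^ r ∣ n, μ d * ((n / d ^ r : ℕ) : ℤ) ^ k :=
        sum_congr rfl fun n hn => genJordan_eq_sum_moebius hr (by grind) k
    _ = ∑ d ∈ Icc 1 N, ∑ n ∈ Icc 1 N with d ^ r ∣ n, μ d * ((n / d ^ r : ℕ) : ℤ) ^ k := by
        refine sum_comm' fun n d => ?_
        simp only [mem_Icc, mem_filter, Nat.mem_divisors]
        constructor
        · rintro ⟨hn, ⟨hdn, -⟩, hdrn⟩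
          exact ⟨⟨hn, hdrn⟩, Nat.pos_of_dvd_of_pos hdn hn.1, (Nat.le_of_dvd hn.1 hdn).trans hn.2⟩
        · rintro ⟨⟨hn, hdrn⟩, -⟩
          exact ⟨hn, ⟨(dvd_pow_self d hr).trans hdrn, by omega⟩, hdrn⟩
    _ = _ := by
        refine sum_congr rfl fun d hd => ?_
        rw [← mul_sum, sum_Icc_filter_dvd_div (fun m => ((m : ℕ) : ℤ) ^ k)
          (pow_ne_zero r (by grind))]

theorem sum_Icc_pow_eq_bernoulli' {K : Type*} [Field K] [CharZero K] {k : ℕ} (hk : k ≠ 0)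
    (M : ℕ) : ∑ m ∈ Icc 1 M, (m : K) ^ (k - 1) =
      1 / (k : K) * ∑ j ∈ range k, (k.choose j : K) * bernoulli' j * (M : K) ^ (k - j) := by
  obtain ⟨p, rfl⟩ := Nat.exists_eq_add_one_of_ne_zero hk
  have := congrArg (Rat.cast : ℚ → K) (sum_Ico_pow M p)
  push_cast at this
  rw [Nat.add_sub_cancel, ← Ico_add_one_right_eq_Icc, this, mul_sum]
  refine sum_congr rfl fun j _ => ?_
  push_cast
  field_simp

lemma natCast_floor_div_eq_sub_fract {K : Type*} [Field K] [LinearOrder K] [IsStrictOrderedRing K]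
    [FloorRing K] {x : K} (hx : 0 ≤ x) (q : ℕ) :
    ((⌊x⌋₊ / q : ℕ) : K) = x / q - Int.fract (x / q) := by
  rw [Int.self_sub_fract, ← Nat.floor_div_natCast, natCast_floor_eq_intCast_floor (by positivity)]

lemma ite_natCast_le_mul_sub_fract_pow {K : Type*} [Field K] [LinearOrder K]
    [IsStrictOrderedRing K] [FloorRing K] (x : K) {q : ℕ} (hq : q ≠ 0) {e : ℕ} (he : e ≠ 0)
    (c : K) : (if (q : K) ≤ x then c * (x / q - Int.fract (x / q)) ^ e else 0) =
      c * ((⌊x⌋₊ / q : ℕ) : K) ^ e := by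
  split_ifs with hqx
  · rw [natCast_floor_div_eq_sub_fract ((Nat.cast_nonneg q).trans hqx)]
  · rw [Nat.div_eq_of_lt ((Nat.floor_lt' hq).2 (not_le.1 hqx)), Nat.cast_zero, zero_pow he,
      mul_zero]

theorem sum_genJordan_eq_bernoulli_sum_general (r k : ℕ) (hr : 1 ≤ r) (hk : 1 ≤ k) (x : ℝ) :
    (∑ n ∈ Finset.Icc 1 ⌊x⌋₊, (genJordan r (k - 1) n : ℝ)) =
      (1 / (k : ℝ)) * ∑ j ∈ Finset.range k, (k.choose j : ℝ) * (bernoulli' j : ℝ) *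
        ∑ d ∈ Finset.Icc 1 ⌊x⌋₊, if (d : ℝ) ^ r ≤ x then
          (ArithmeticFunction.moebius d : ℝ) *
            (x / (d : ℝ) ^ r - Int.fract (x / (d : ℝ) ^ r)) ^ (k - j) else 0 := by
  have hr₀ : r ≠ 0 := Nat.one_le_iff_ne_zero.mp hr
  calc (∑ n ∈ Icc 1 ⌊x⌋₊, (genJordan r (k - 1) n : ℝ))
      = ∑ d ∈ Icc 1 ⌊x⌋₊, (μ d : ℝ) * ∑ m ∈ Icc 1 (⌊x⌋₊ / d ^ r), (m : ℝ) ^ (k - 1) := by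
        exact_mod_cast congrArg (Int.cast : ℤ → ℝ)
          (sum_genJordan_eq_sum_moebius_mul_sum_pow hr₀ (k - 1) ⌊x⌋₊)
    _ = 1 / k * ∑ j ∈ range k, (k.choose j : ℝ) * bernoulli' j *
          ∑ d ∈ Icc 1 ⌊x⌋₊, (μ d : ℝ) * ((⌊x⌋₊ / d ^ r : ℕ) : ℝ) ^ (k - j) := by
        simp_rw [sum_Icc_pow_eq_bernoulli' (K := ℝ) (by omega : k ≠ 0), mul_sum]
        rw [sum_comm]
        exact sum_congr rfl fun d _ => sum_congr rfl fun j _ => by ring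
    _ = _ := by
        refine congrArg _ (sum_congr rfl fun j hj => congrArg _ (sum_congr rfl fun d hd => ?_))
        have := ite_natCast_le_mul_sub_fract_pow x (pow_ne_zero r (by grind) : d ^ r ≠ 0)
          (by grind : k - j ≠ 0) (μ d : ℝ)
        push_cast at this
        exact this.symm

theorem sum_genJordan_eq_bernoulli_sum (r k : ℕ) (hr : 1 ≤ r) (hk : 1 ≤ k) (x : ℝ) (hx : 1 ≤ x) :
    (∑ n ∈ Finset.Icc 1 ⌊x⌋₊, (genJordan r (k - 1) n : ℝ)) =
      (1 / (k : ℝ)) * ∑ j ∈ Finset.range k, (k.choose j : ℝ) * (bernoulli' j : ℝ) *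
        ∑ d ∈ Finset.Icc 1 ⌊x⌋₊, if (d : ℝ) ^ r ≤ x then
          (ArithmeticFunction.moebius d : ℝ) *
            (x / (d : ℝ) ^ r - Int.fract (x / (d : ℝ) ^ r)) ^ (k - j) else 0 :=
  sum_genJordan_eq_bernoulli_sum_general r k hr hk x
end
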